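/- Property D3 holds for the proof structure of any type of L*(\,!): if a O* b and d(b) is odd, then H(b) ≤ a in the linear order. -/

import Mathlib

/-- Types of the calculus L*(\,!): primitive types, left division, and the modality `!`. -/
inductive Tp : Type
  | pr : ℕ → Tp
  | div : Tp → Tp → Tp   -- `div A B` is the left division  A \ B
  | bang : Tp → Tp        -- `bang A` is  !A

namespace Tp

/-! ### The proof structure of a type

Vertices of the tree associated to a type are represented by their paths from the
root `[]`; at a vertex of the form `div A B`, step `0` goes into the subtree of `A`
(arc labelled `-1`) and step `1` goes into the subtree of `B` (arc labelled `1`);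
at a vertex of the form `bang A`, step `0` goes into the subtree of `A`
(arc labelled `2`).  Arcs are directed towards the root, so the parent of a vertex
`b ++ [k]` is `b`, and `a O* b` means that `b` is a prefix of `a`. -/

/-- `isVertex T p` : the path `p` is a vertex of the tree of the type `T`. -/
def isVertex : Tp → List ℕ → Prop
  | _, [] => True
  | bang A, 0 :: p => isVertex A p
  | div A _, 0 :: p => isVertex A p
  | div _ B, 1 :: p => isVertex B p
  | _, _ => False

/-- The subtype of `T` located at the vertex `p` (junk value off vertices). -/
def subAt : Tp → List ℕ → Tp
  | A, [] => A
  | bang A, 0 :: p => subAt A p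
  | div A _, 0 :: p => subAt A p
  | div _ B, 1 :: p => subAt B p
  | A, _ => A

/-- `d a`: the number of arcs labelled `-1` on the path from the vertex `a` to the root. -/
def dpth : Tp → List ℕ → ℕ
  | div A _, 0 :: p => dpth A p + 1
  | div _ B, 1 :: p => dpth B p
  | bang A, 0 :: p => dpth A p
  | _, _ => 0

/-- The path from (the root of the tree of) a type down to the unique leaf reachable
without using arcs labelled `-1`. -/
def hext : Tp → List ℕ
  | pr _ => []
  | bang A => 0 :: hext A
  | div _ B => 1 :: hext B

/-- `H T a`: the unique leaf from which a path without `-1`-labelled arcs leads to `a`. -/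
def H (T : Tp) (a : List ℕ) : List ℕ := a ++ hext (subAt T a)

/-- The strict linear order `<` on the vertices of the tree of a type:
for a primitive type it is trivial; for `!A` the new root is the minimum;
for `A \ B` it is the sum of the reversed order of `A`'s tree, the new root,
and the order of `B`'s tree. -/
def lt : Tp → List ℕ → List ℕ → Prop
  | bang A, 0 :: p, 0 :: q => lt A p q
  | bang _, [], _ :: _ => True
  | div A _, 0 :: p, 0 :: q => lt A q p
  | div _ _, 0 :: _, [] => True
  | div _ _, 0 :: _, 1 :: _ => True
  | div _ _, [], 1 :: _ => True
  | div _ B, 1 :: p, 1 :: q => lt B p q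
  | _, _, _ => False

/-- The reflexive closure `≤` of the order `<`. -/
def le (T : Tp) (a b : List ℕ) : Prop := lt T a b ∨ a = b

/-- `isLeaf T a`: the vertex `a` is a leaf of the tree of `T`. -/
def isLeaf (T : Tp) (a : List ℕ) : Prop := isVertex T a ∧ ∃ i, subAt T a = pr i

/-- The label (index of the primitive type) of a leaf (junk value off leaves). -/
def labelNat (T : Tp) (a : List ℕ) : ℕ :=
  match subAt T a with
  | pr i => i
  | _ => 0

/-- `Orel T a b`: `b` is the parent of `a` (the arc from `a` points to `b`). -/
def Orel (T : Tp) (a b : List ℕ) : Prop := isVertex T a ∧ ∃ k, a = b ++ [k]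

/-- The label in `{-1, 1, 2}` of the arc from the child `b ++ [k]` to its parent `b`
(junk value `0` if `b` is a leaf). -/
def arcLab (T : Tp) (b : List ℕ) (k : ℕ) : ℤ :=
  match subAt T b with
  | div _ _ => if k = 0 then -1 else 1
  | bang _ => 2
  | pr _ => 0

end Tp

/-- The type whose proof structure is, by definition, the proof structure of the
sequent `A₁ … Aₙ → B`, namely `Aₙ \ (Aₙ₋₁ \ ⋯ \ (A₁ \ B) ⋯)`. -/
def seqType (Γ : List Tp) (B : Tp) : Tp := Γ.foldl (fun C A => Tp.div A C) B

/-- A proof net for the sequent whose proof structure is the tree of the type `T`: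
a set `U` of vertices and a binary relation `S` on leaves satisfying PN1–PN11. -/
structure ProofNet (T : Tp) where
  U : List ℕ → Prop
  S : List ℕ → List ℕ → Prop
  U_sub : ∀ a, U a → T.isVertex a
  S_sub : ∀ a b, S a b → T.isLeaf a ∧ T.isLeaf b
  /-- PN1: `S` is symmetric. -/
  pn1 : ∀ a b, S a b → S b a
  /-- PN2: `S` is functional. -/
  pn2 : ∀ a b c, S a b → S a c → b = c
  /-- PN3: `S` is planar. -/
  pn3 : ∀ a b c d, S a b → S c d → T.lt a c → T.lt c b → T.lt a d ∧ T.lt d b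
  /-- PN4: `S`-linked leaves carry equal labels. -/
  pn4 : ∀ a b, S a b → T.labelNat a = T.labelNat b
  /-- PN5: if `(a,b) ∈ S` and `a < b` then `d(a) = d(b) + 1`. -/
  pn5 : ∀ a b, S a b → T.lt a b → T.dpth a = T.dpth b + 1
  /-- PN6: if `a O* c`, `H(c) = b`, `a ∈ pr₁(S)` and `a < S(b) < b`, then there is a
  `d` with `S(a) O* d` and `H(d) = b`. -/
  pn6 : ∀ a c b a' b', T.isVertex a → c <+: a → T.H c = b → S a a' → S b b' →
      T.lt a b' → T.lt b' b → ∃ d, d <+: a' ∧ T.H d = b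
  /-- PN7: `S` is nonempty. -/
  pn7 : ∃ a b, S a b
  /-- PN8: `pr₁(S) = W ∩ U`. -/
  pn8 : ∀ a, (∃ b, S a b) ↔ (T.isLeaf a ∧ U a)
  /-- PN9: if `a O b` and `b ∉ U` then `a ∉ U`. -/
  pn9 : ∀ a b, T.Orel a b → ¬ U b → ¬ U a
  /-- PN10: if `a O b`, `a ∉ U` and `or(a,b) ≠ 2` then `b ∉ U`. -/
  pn10 : ∀ b k, T.isVertex (b ++ [k]) → ¬ U (b ++ [k]) → T.arcLab b k ≠ 2 → ¬ U b
  /-- PN11: if `a O b` and `d(b)` is even then `or(a,b) ≠ 2`. -/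
  pn11 : ∀ b k, T.isVertex (b ++ [k]) → Even (T.dpth b) → T.arcLab b k ≠ 2

/-
The `-1`-free path from `H(b)` to `b` runs along the rightmost branch of the subtree at `b`,
so `H(b)` is the maximum of that subtree in its own order. Descending from the root, each
`-1`-labelled arc reverses the order of the subtree below it, so inside the whole tree `H(b)`
is the maximum of the subtree at `b` when `d(b)` is even and its minimum when `d(b)` is odd.
-/

namespace Tp

@[simp] lemma dpth_nil (A : Tp) : A.dpth [] = 0 := by
  cases A <;> rfl

@[simp] lemma H_nil (A : Tp) : A.H [] = A.hext := by
  cases A <;> rfl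

@[simp] lemma dpth_bang_cons (A : Tp) (q : List ℕ) : (bang A).dpth (0 :: q) = A.dpth q := rfl

@[simp] lemma dpth_div_zero_cons (A B : Tp) (q : List ℕ) :
    (div A B).dpth (0 :: q) = A.dpth q + 1 := rfl

@[simp] lemma dpth_div_one_cons (A B : Tp) (q : List ℕ) : (div A B).dpth (1 :: q) = B.dpth q :=
  rfl

@[simp] lemma H_bang_cons (A : Tp) (q : List ℕ) : (bang A).H (0 :: q) = 0 :: A.H q := rfl

@[simp] lemma H_div_zero_cons (A B : Tp) (q : List ℕ) : (div A B).H (0 :: q) = 0 :: A.H q := rfl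

@[simp] lemma H_div_one_cons (A B : Tp) (q : List ℕ) : (div A B).H (1 :: q) = 1 :: B.H q := rfl

@[simp] lemma le_bang_cons_cons {A : Tp} {p q : List ℕ} :
    (bang A).le (0 :: p) (0 :: q) ↔ A.le p q := by
  simp [le, lt]

@[simp] lemma le_div_zero_cons_cons {A B : Tp} {p q : List ℕ} :
    (div A B).le (0 :: p) (0 :: q) ↔ A.le q p := by
  simp [le, lt, eq_comm]

@[simp] lemma le_div_one_cons_cons {A B : Tp} {p q : List ℕ} :
    (div A B).le (1 :: p) (1 :: q) ↔ B.le p q := by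
  simp [le, lt]

lemma le_hext {A : Tp} {a : List ℕ} (ha : A.isVertex a) : A.le a A.hext := by
  induction A generalizing a with
  | pr i =>
    cases a with
    | nil => exact Or.inr rfl
    | cons k p => simp [isVertex] at ha
  | bang A ih =>
    rcases a with _ | ⟨_ | k, p⟩
    · exact Or.inl trivial
    · exact le_bang_cons_cons.mpr (ih ha)
    · simp [isVertex] at ha
  | div A B _ ihB =>
    rcases a with _ | ⟨_ | _ | k, p⟩
    · exact Or.inl trivial
    · exact Or.inl trivial
    · exact le_div_one_cons_cons.mpr (ihB ha)
    · simp [isVertex] at ha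

theorem H_le_of_odd_and_le_H_of_even {A : Tp} {a b : List ℕ} (ha : A.isVertex a)
    (hab : b <+: a) :
    (Odd (A.dpth b) → A.le (A.H b) a) ∧ (Even (A.dpth b) → A.le a (A.H b)) := by
  induction A generalizing a b with
  | pr i =>
    rcases b with _ | ⟨k, q⟩
    · simpa using le_hext ha
    obtain ⟨p, rfl, -⟩ := List.cons_prefix_iff.mp hab
    simp [isVertex] at ha
  | bang A ih =>
    rcases b with _ | ⟨_ | k, q⟩
    · simpa using le_hext ha
    all_goals obtain ⟨p, rfl, hqp⟩ := List.cons_prefix_iff.mp hab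
    · simpa using ih ha hqp
    · simp [isVertex] at ha
  | div A B ihA ihB =>
    rcases b with _ | ⟨_ | _ | k, q⟩
    · simpa using le_hext ha
    all_goals obtain ⟨p, rfl, hqp⟩ := List.cons_prefix_iff.mp hab
    · simp only [dpth_div_zero_cons, H_div_zero_cons, le_div_zero_cons_cons, Nat.odd_add_one,
        Nat.not_odd_iff_even, Nat.even_add_one, Nat.not_even_iff_odd]
      exact (ihA ha hqp).symm
    · simpa using ihB ha hqp
    · simp [isVertex] at ha

end Tp

/-- Property D3: if `a O* b` and `d(b)` is odd, then `H(b) ≤ a`. -/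
theorem stmt12 (A : Tp) (a b : List ℕ) (ha : A.isVertex a)
    (hab : b <+: a) (hodd : Odd (A.dpth b)) :
    A.le (A.H b) a :=
  (Tp.H_le_of_odd_and_le_H_of_even ha hab).1 hodd
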